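/- arXiv:2104.13758 — 2 statements merged into one kernel-verified Lean document; each statement's English description precedes it below -/
import Mathlib

section
/- A necessary condition for convergence of SOR: if the SOR iteration matrix M_ω = (D + ωL)⁻¹((1-ω)D - ωU) for a matrix A = D + L + U with invertible diagonal D converges for all initial guesses, then 0 < ω < 2 (Kahan's theorem: the spectral radius of M_ω satisfies ρ(M_ω) ≥ |ω - 1|). -/
/-!
Both factors of `M_ω = (D + ωL)⁻¹ ((1 - ω)D - ωU)` are triangular, with diagonals `D`
and `(1 - ω)D`, so `det M_ω = (1 - ω)ⁿ`. Over `ℂ` the determinant is the product of the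
`n` roots of the characteristic polynomial, so a root `μ` of largest modulus has
`|1 - ω|ⁿ ≤ |μ|ⁿ`; every such root is an eigenvalue.
-/

open Matrix Polynomial

section Triangular

variable {ι R : Type*} [Fintype ι] [LinearOrder ι] [CommRing R] {D N : Matrix ι ι R}

theorem Matrix.IsDiag.det_add_of_strictUpper (hD : D.IsDiag) (hN : ∀ i j, j ≤ i → N i j = 0) :
    (D + N).det = D.det := by
  have hDN : (D + N).BlockTriangular id := fun i j (hji : j < i) => by
    simp [hD hji.ne', hN i j hji.le]
  have hD' : D.BlockTriangular id := fun i j (hji : j < i) => hD hji.ne'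
  rw [det_of_isUpperTriangular hDN, det_of_isUpperTriangular hD']
  simp [hN]

theorem Matrix.IsDiag.det_add_of_strictLower (hD : D.IsDiag) (hN : ∀ i j, i ≤ j → N i j = 0) :
    (D + N).det = D.det := by
  rw [← det_transpose, transpose_add, hD.isSymm.eq]
  exact hD.det_add_of_strictUpper fun i j h => hN j i h

end Triangular

noncomputable def sorMatrix {ι K : Type*} [Fintype ι] [DecidableEq ι] [Field K]
    (D L U : Matrix ι ι K) (ω : K) : Matrix ι ι K :=
  (D + ω • L)⁻¹ * ((1 - ω) • D - ω • U)

theorem det_sorMatrix {ι K : Type*} [Fintype ι] [LinearOrder ι] [Field K]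
    {D L U : Matrix ι ι K} (hD : D.IsDiag) (hdet : D.det ≠ 0)
    (hL : ∀ i j, i ≤ j → L i j = 0) (hU : ∀ i j, j ≤ i → U i j = 0) (ω : K) :
    (sorMatrix D L U ω).det = (1 - ω) ^ Fintype.card ι := by
  have hlower : (D + ω • L).det = D.det :=
    hD.det_add_of_strictLower fun i j h => by simp [hL i j h]
  have hupper : ((1 - ω) • D - ω • U).det = (1 - ω) ^ Fintype.card ι * D.det := by
    rw [sub_eq_add_neg, (hD.smul _).det_add_of_strictUpper fun i j h => by simp [hU i j h],
      det_smul]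
  rw [sorMatrix, det_mul, det_nonsing_inv, hlower, hupper, Ring.inverse_eq_inv']
  field_simp

theorem Matrix.exists_mulVec_eq_smul_of_isRoot_charpoly {ι K : Type*} [Fintype ι]
    [DecidableEq ι] [Field K] {A : Matrix ι ι K} {μ : K} (hμ : A.charpoly.IsRoot μ) :
    ∃ v ≠ 0, A *ᵥ v = μ • v := by
  rw [IsRoot, eval_charpoly, ← exists_mulVec_eq_zero_iff] at hμ
  obtain ⟨v, hv, hμv⟩ := hμ
  refine ⟨v, hv, ?_⟩
  rw [sub_mulVec, scalar_apply, ← smul_one_eq_diagonal, smul_mulVec, one_mulVec,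
    sub_eq_zero] at hμv
  exact hμv.symm

theorem Matrix.exists_eigenvector_norm_det_le {ι K : Type*} [Fintype ι] [DecidableEq ι]
    [Nonempty ι] [NormedField K] [IsAlgClosed K] (A : Matrix ι ι K) :
    ∃ μ : K, ∃ v ≠ 0, A *ᵥ v = μ • v ∧ ‖A.det‖ ≤ ‖μ‖ ^ Fintype.card ι := by
  have hcard : A.charpoly.roots.card = Fintype.card ι := by
    rw [IsAlgClosed.card_roots_eq_natDegree, charpoly_natDegree_eq_dim]
  have hroots : A.charpoly.roots ≠ 0 := by
    rw [← Multiset.card_pos, hcard]; exact Fintype.card_pos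
  obtain ⟨μ, hμ, hmax⟩ := Multiset.exists_max_image (‖·‖) hroots
  obtain ⟨v, hv, hAv⟩ := exists_mulVec_eq_smul_of_isRoot_charpoly (isRoot_of_mem_roots hμ)
  refine ⟨μ, v, hv, hAv, ?_⟩
  calc ‖A.det‖ = (A.charpoly.roots.map (normHom : K →*₀ ℝ)).prod := by
        rw [det_eq_prod_roots_charpoly, ← map_multiset_prod, normHom_apply]
    _ ≤ ‖μ‖ ^ Fintype.card ι := by
        rw [← hcard]
        exact Multiset.prod_map_le_pow_card (fun x _ => norm_nonneg x) hmax

theorem kahan_sor_spectral_radius_general (n : ℕ) (hn : 1 ≤ n)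
    (D L U : Matrix (Fin n) (Fin n) ℂ)
    (hdiag : D.IsDiag) (hD : IsUnit D)
    (hL : ∀ i j : Fin n, i ≤ j → L i j = 0)
    (hU : ∀ i j : Fin n, j ≤ i → U i j = 0)
    (ω : ℝ) :
    ∃ μ : ℂ, ∃ v : Fin n → ℂ, v ≠ 0 ∧
      ((D + (ω : ℂ) • L)⁻¹ * ((1 - (ω : ℂ)) • D - (ω : ℂ) • U)).mulVec v = μ • v ∧
      |ω - 1| ≤ ‖μ‖ := by
  have : Nonempty (Fin n) := ⟨⟨0, hn⟩⟩
  obtain ⟨μ, v, hv, hMv, hdet⟩ := (sorMatrix D L U (ω : ℂ)).exists_eigenvector_norm_det_le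
  rw [det_sorMatrix hdiag ((isUnit_iff_isUnit_det D).mp hD).ne_zero hL hU, Fintype.card_fin,
    norm_pow] at hdet
  have hnorm : ‖1 - (ω : ℂ)‖ = |ω - 1| := by
    rw [← Complex.ofReal_one, ← Complex.ofReal_sub, Complex.norm_real, Real.norm_eq_abs,
      abs_sub_comm]
  refine ⟨μ, v, hv, hMv, ?_⟩
  rw [← hnorm]
  exact (pow_le_pow_iff_left₀ (norm_nonneg _) (norm_nonneg _) (by omega)).mp hdet

theorem kahan_sor_spectral_radius (n : ℕ) (hn : 1 ≤ n)
    (D L U : Matrix (Fin n) (Fin n) ℂ)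
    (hdiag : D.IsDiag) (hD : IsUnit D)
    (hL : ∀ i j : Fin n, i ≤ j → L i j = 0)
    (hU : ∀ i j : Fin n, j ≤ i → U i j = 0)
    (ω : ℝ) (hinv : IsUnit (D + (ω : ℂ) • L)) :
    ∃ μ : ℂ, ∃ v : Fin n → ℂ, v ≠ 0 ∧
      ((D + (ω : ℂ) • L)⁻¹ * ((1 - (ω : ℂ)) • D - (ω : ℂ) • U)).mulVec v = μ • v ∧
      |ω - 1| ≤ ‖μ‖ :=
  kahan_sor_spectral_radius_general n hn D L U hdiag hD hL hU ω
end

section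
/- The determinant of the SOR iteration matrix M_ω = (D + ωL)⁻¹((1-ω)D - ωU) equals (1-ω)ⁿ. -/
open Matrix

theorem sor_iteration_matrix_det (n : ℕ)
    (D L U : Matrix (Fin n) (Fin n) ℂ)
    (hdiag : D.IsDiag) (hD : IsUnit D)
    (hL : ∀ i j : Fin n, i ≤ j → L i j = 0)
    (hU : ∀ i j : Fin n, j ≤ i → U i j = 0)
    (ω : ℂ) (hinv : IsUnit (D + ω • L)) :
    ((D + ω • L)⁻¹ * ((1 - ω) • D - ω • U)).det = (1 - ω) ^ n := by
  have h1 : (D + ω • L).det = ∏ i, D i i := by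
    rw [Matrix.det_of_lowerTriangular]
    · refine Finset.prod_congr rfl fun i _ => ?_
      simp [Matrix.add_apply, hL i i le_rfl]
    · intro i j hij
      simp [Matrix.add_apply, hdiag (show i ≠ j from ne_of_lt hij), hL i j hij.le]
  have h2 : ((1 - ω) • D - ω • U).det = (1 - ω) ^ n * ∏ i, D i i := by
    rw [Matrix.det_of_upperTriangular]
    · simp only [Matrix.sub_apply, Matrix.smul_apply, hU _ _ (le_refl _), smul_zero,
        sub_zero, smul_eq_mul, mul_zero]
      rw [Finset.prod_mul_distrib, Finset.prod_const, Finset.card_univ, Fintype.card_fin]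
    · intro i j hij
      simp [Matrix.sub_apply, hdiag (show i ≠ j from hij.ne'), hU i j hij.le]
  have hDdet : (∏ i, D i i) ≠ 0 := by
    have hd : D.det = ∏ i, D i i := by
      rw [← hdiag.diagonal_diag, Matrix.det_diagonal]
      simp [Matrix.diag]
    have := (Matrix.isUnit_iff_isUnit_det D).mp hD
    rw [hd] at this
    exact this.ne_zero
  have hinvdet := (Matrix.isUnit_iff_isUnit_det _).mp hinv
  rw [Matrix.det_mul, Matrix.det_nonsing_inv, h1, h2, Ring.inverse_eq_inv]
  field_simp
end
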